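/- arXiv:2502.08594 — 10 statements merged into one kernel-verified Lean document; each statement's English description precedes it below -/
import Mathlib

section
/- For N ≥ 2 and s ∈ [0,1], the quantity c(s) = (1/g(s)) * (1 - 2((N-1)/N)(1-s)) satisfies -(N-2)/N ≤ c(s) ≤ 1, where g(s) = sqrt(1 - 4((N-1)/N)s(1-s)). -/
theorem stmt_2 (N : ℝ) (hN : N ≥ 2) (s : ℝ) (hs : s ∈ Set.Icc (0:ℝ) 1) :
    -((N-2)/N) ≤ (1 - 2*((N-1)/N)*(1-s)) / Real.sqrt (1 - 4*((N-1)/N)*s*(1-s)) ∧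
    (1 - 2*((N-1)/N)*(1-s)) / Real.sqrt (1 - 4*((N-1)/N)*s*(1-s)) ≤ 1 := by
  obtain ⟨hs0, hs1⟩ := hs
  have hN0 : (0:ℝ) < N := by linarith
  set a : ℝ := (N-1)/N with ha_def
  have ha : (1:ℝ)/2 ≤ a := by rw [ha_def, le_div_iff₀ hN0]; linarith
  have ha1 : a < 1 := by rw [ha_def, div_lt_one hN0]; linarith
  have hsub : (N-2)/N = 2*a - 1 := by rw [ha_def]; field_simp; ring
  set G : ℝ := 1 - 4*a*s*(1-s) with hG_def
  have hGpos : 0 < G := by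
    nlinarith [mul_nonneg (show (0:ℝ) ≤ a by linarith) (sq_nonneg (2*s-1))]
  have hsq : 0 < Real.sqrt G := Real.sqrt_pos.mpr hGpos
  set num : ℝ := 1 - 2*a*(1-s) with hnum_def
  constructor
  · rw [hsub, le_div_iff₀ hsq]
    rcases le_or_gt 0 num with h | h
    · have : -(2*a-1) * Real.sqrt G ≤ 0 := by
        apply mul_nonpos_of_nonpos_of_nonneg
        · linarith
        · exact hsq.le
      linarith
    · have hB : 0 ≤ (4*a-1)*(1-s) - 1 := by
        nlinarith [mul_nonneg (show (0:ℝ) ≤ 2*a-1 by linarith)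
          (show (0:ℝ) ≤ 1-s by linarith)]
      have key : num^2 ≤ ((2*a-1) * Real.sqrt G)^2 := by
        rw [mul_pow, Real.sq_sqrt hGpos.le]
        nlinarith [mul_nonneg (mul_nonneg (mul_nonneg
          (show (0:ℝ) ≤ 4*a by linarith) (show (0:ℝ) ≤ 1-a by linarith)) hs0) hB]
      have h2 : 0 ≤ (2*a-1) * Real.sqrt G :=
        mul_nonneg (by linarith) hsq.le
      nlinarith
  · rw [div_le_one hsq]
    rcases le_or_gt num 0 with h | h
    · linarith
    · have hh : num = Real.sqrt (num^2) := (Real.sqrt_sq h.le).symm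
      rw [hh]
      apply Real.sqrt_le_sqrt
      nlinarith [mul_nonneg (mul_nonneg (show (0:ℝ) ≤ 4*a by linarith)
        (show (0:ℝ) ≤ 1-a by linarith)) (sq_nonneg (1-s))]
end

section
/- For N ≥ 2 and s ∈ [0,1], the definite integral ∫₀^s (1 - 4((N-1)/N) x(1-x))^(-3/2) dx equals (N/2) * [1 + (2s-1)/sqrt(1 - 4((N-1)/N)s(1-s))]. -/
/-!
Write `q(x) = 1 - 4c·x(1-x) = (1-c) + c(2x-1)²` with `c = (N-1)/N`, so `q > 0` for `0 ≤ c < 1`.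
Since `q' = 4c(2x-1)`, the derivative of `(2x-1)/√q` is `(2q - 2c(2x-1)²)/q^{3/2} = 2(1-c)/q^{3/2}`,
and `2(1-c) = 2/N`; the fundamental theorem of calculus finishes, as `(2·0-1)/√q(0) = -1`.
-/

open Real

lemma rpow_neg_three_halves {y : ℝ} (hy : 0 < y) : y ^ (-(3:ℝ)/2) = (y * √y)⁻¹ := by
  rw [show -(3:ℝ)/2 = -(1 + 1/2) by norm_num, rpow_neg hy.le, rpow_add hy, rpow_one,
    ← sqrt_eq_rpow]

lemma one_sub_four_mul_pos {c : ℝ} (hc0 : 0 ≤ c) (hc1 : c < 1) (x : ℝ) :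
    0 < 1 - 4*c*x*(1-x) := by
  nlinarith [mul_nonneg hc0 (sq_nonneg (2*x-1))]

lemma hasDerivAt_div_sqrt_one_sub_four_mul {c x : ℝ} (hx : 0 < 1 - 4*c*x*(1-x)) :
    HasDerivAt (fun a => (2*a-1) / √(1 - 4*c*a*(1-a)))
      (2*(1-c) * (1 - 4*c*x*(1-x)) ^ (-(3:ℝ)/2)) x := by
  have hq : HasDerivAt (fun a => 1 - 4*c*a*(1-a)) (4*c*(2*x-1)) x :=
    ((((hasDerivAt_id' x).const_mul (4*c)).mul ((hasDerivAt_id' x).const_sub 1)).const_sub 1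
      ).congr_deriv (by ring)
  have hlin : HasDerivAt (fun a : ℝ => 2*a - 1) 2 x :=
    (((hasDerivAt_id' x).const_mul 2).sub_const 1).congr_deriv (by ring)
  refine (hlin.div (hq.sqrt hx.ne') (sqrt_pos.2 hx).ne').congr_deriv ?_
  rw [rpow_neg_three_halves hx]
  field_simp
  rw [sq_sqrt hx.le]
  ring

theorem integral_one_sub_four_mul_rpow_neg_three_halves {c : ℝ} (hc0 : 0 ≤ c) (hc1 : c < 1)
    (s : ℝ) :
    2*(1-c) * ∫ x in (0:ℝ)..s, (1 - 4*c*x*(1-x)) ^ (-(3:ℝ)/2)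
      = 1 + (2*s-1) / √(1 - 4*c*s*(1-s)) := by
  have hq := one_sub_four_mul_pos hc0 hc1
  rw [← intervalIntegral.integral_const_mul,
    intervalIntegral.integral_eq_sub_of_hasDerivAt
      (fun x _ => hasDerivAt_div_sqrt_one_sub_four_mul (hq x))]
  · simp only [mul_zero, zero_sub, sub_zero, mul_one, sqrt_one, div_one, sub_neg_eq_add]
    ring
  · refine ContinuousOn.intervalIntegrable (ContinuousOn.mul continuousOn_const ?_)
    exact ContinuousOn.rpow_const (by fun_prop) fun x _ => Or.inl (hq x).ne'

theorem stmt_5_general (N : ℝ) (hN : N ≥ 2) (s : ℝ) :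
    ∫ x in (0:ℝ)..s, (1 - 4*((N-1)/N)*x*(1-x)) ^ (-(3:ℝ)/2)
      = (N/2) * (1 + (2*s-1) / Real.sqrt (1 - 4*((N-1)/N)*s*(1-s))) := by
  have hN0 : N ≠ 0 := by positivity
  have hc : 2*(1 - (N-1)/N) = 2/N := by field_simp; ring
  rw [← integral_one_sub_four_mul_rpow_neg_three_halves (c := (N-1)/N) _ _ s, hc]
  · field_simp
  · exact div_nonneg (by linarith) (by linarith)
  · rw [div_lt_one (by linarith)]; linarith

theorem stmt_5 (N : ℝ) (hN : N ≥ 2) (s : ℝ) (hs : s ∈ Set.Icc (0:ℝ) 1) :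
    ∫ x in (0:ℝ)..s, (1 - 4*((N-1)/N)*x*(1-x)) ^ (-(3:ℝ)/2)
      = (N/2) * (1 + (2*s-1) / Real.sqrt (1 - 4*((N-1)/N)*s*(1-s))) :=
  stmt_5_general N hN s
end

section
/- For N ≥ 2, define τ(s) = (1/2)[1 + (2s-1)/sqrt(1 - 4((N-1)/N)s(1-s))] for s ∈ [0,1] and S(τ) = (1/2)[1 + (2τ-1)/sqrt(1 + 4(N-1)τ(1-τ))] for τ ∈ [0,1]. Then S(τ(s)) = s for all s ∈ [0,1]. -/
theorem stmt_6 (N : ℝ) (hN : N ≥ 2) (s : ℝ) (hs : s ∈ Set.Icc (0:ℝ) 1) :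
    (fun τ : ℝ => (1/2) * (1 + (2*τ-1) / Real.sqrt (1 + 4*(N-1)*τ*(1-τ))))
      ((1/2) * (1 + (2*s-1) / Real.sqrt (1 - 4*((N-1)/N)*s*(1-s)))) = s := by
  obtain ⟨hs0, hs1⟩ := hs
  have hN0 : (0:ℝ) < N := by linarith
  set d : ℝ := 1 - 4*((N-1)/N)*s*(1-s) with hd_def
  have hdN : d * N = N - 4*(N-1)*s*(1-s) := by
    rw [hd_def]; field_simp
  have hd : 0 < d := by
    have h2 : (0:ℝ) < d * N := by
      rw [hdN]; nlinarith [sq_nonneg (2*s-1)]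
    nlinarith [h2, hN0]
  set r : ℝ := Real.sqrt d with hr_def
  have hr : 0 < r := Real.sqrt_pos.mpr hd
  have hrne : r ≠ 0 := ne_of_gt hr
  have hr2 : r^2 = d := Real.sq_sqrt hd.le
  set τ : ℝ := (1/2) * (1 + (2*s-1) / r) with hτ_def
  have hτ1 : τ = (r + (2*s-1))/(2*r) := by
    rw [hτ_def]; field_simp
  have key : (1 + 4*(N-1)*τ*(1-τ)) * d = 1 := by
    rw [hτ1]
    field_simp
    linear_combination ((4 + 4*(N-1))*d - 4) * hr2 + 4*d*hdN
  have hE : 1 + 4*(N-1)*τ*(1-τ) = 1/d := by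
    rw [eq_div_iff hd.ne']; exact key
  simp only
  rw [hE, one_div d, Real.sqrt_inv, ← hr_def, hτ_def]
  field_simp
  ring
end

section
/- For N ≥ 2, define q(s) = (1/2)[1 + (1 - 2((N-1)/N)(1-s))/sqrt(1 - 4((N-1)/N)s(1-s))]. Then q(0) = 1/N, q(1) = 1, and q is strictly increasing on [0,1], so q(s) ∈ [1/N, 1] for all s ∈ [0,1]. -/
/-!
Put `c = (N - 1)/N ∈ (0, 1)`. For `s < 1`, dividing numerator and denominator by `1 - s` turns the
quotient in `q` into `x / √(x² + 4c(1 - c))` with `x = 1/(1 - s) - 2c`, because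
`1 - 4cs(1 - s) = (1 - s)² (x² + 4c(1 - c))`. Since `x / √(x² + m) = sin (arctan (x / √m))` for
`m > 0`, this is a strictly increasing function of the strictly increasing `x`, and it stays below `1`,
which is its value at `s = 1`.
-/

open Real Set

noncomputable def markedProb (c s : ℝ) : ℝ :=
  (1/2) * (1 + (1 - 2*c*(1-s)) / √(1 - 4*c*s*(1-s)))

lemma div_sqrt_sq_add_eq_sin_arctan (x : ℝ) {m : ℝ} (hm : 0 < m) :
    x / √(x^2 + m) = sin (arctan (x / √m)) := by
  have hsm : 0 < √m := sqrt_pos.mpr hm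
  have hsplit : 1 + (x / √m)^2 = (x^2 + m) / m := by
    rw [div_pow, sq_sqrt hm.le]; field_simp; ring
  have hxm : 0 < √(x^2 + m) := sqrt_pos.mpr (by positivity)
  rw [sin_arctan, hsplit, sqrt_div' _ hm.le]
  field_simp

lemma strictMono_div_sqrt_sq_add {m : ℝ} (hm : 0 < m) :
    StrictMono fun x : ℝ => x / √(x^2 + m) := by
  intro x y hxy
  simp only [div_sqrt_sq_add_eq_sin_arctan _ hm]
  exact strictMonoOn_sin (Ioo_subset_Icc_self (arctan_mem_Ioo _))
    (Ioo_subset_Icc_self (arctan_mem_Ioo _))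
    (arctan_strictMono (div_lt_div_of_pos_right hxy (sqrt_pos.mpr hm)))

lemma div_sqrt_sq_add_lt_one (x : ℝ) {m : ℝ} (hm : 0 < m) : x / √(x^2 + m) < 1 := by
  have hlt : |x| < √(x^2 + m) := by
    rw [← sqrt_sq_eq_abs]; exact sqrt_lt_sqrt (sq_nonneg x) (by linarith)
  exact (div_lt_one ((abs_nonneg x).trans_lt hlt)).mpr ((le_abs_self x).trans_lt hlt)

lemma markedProb_eq_of_lt_one (c : ℝ) {s : ℝ} (hs : s < 1) :
    markedProb c s =
      (1/2) * (1 + (1/(1-s) - 2*c) / √((1/(1-s) - 2*c)^2 + 4*c*(1-c))) := by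
  have hu : 0 < 1 - s := sub_pos.mpr hs
  have hnum : 1 - 2*c*(1-s) = (1-s) * (1/(1-s) - 2*c) := by field_simp
  have hden : 1 - 4*c*s*(1-s) = (1-s)^2 * ((1/(1-s) - 2*c)^2 + 4*c*(1-c)) := by
    field_simp; ring
  rw [markedProb, hnum, hden, sqrt_mul (sq_nonneg _), sqrt_sq hu.le, mul_div_mul_left _ _ hu.ne']

lemma markedProb_zero (c : ℝ) : markedProb c 0 = 1 - c := by
  norm_num [markedProb]; ring

lemma markedProb_one (c : ℝ) : markedProb c 1 = 1 := by
  norm_num [markedProb]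

lemma markedProb_lt_one {c s : ℝ} (hc0 : 0 < c) (hc1 : c < 1) (hs : s < 1) :
    markedProb c s < 1 := by
  rw [markedProb_eq_of_lt_one c hs]
  have := div_sqrt_sq_add_lt_one (1/(1-s) - 2*c) (by nlinarith : 0 < 4*c*(1-c))
  linarith

lemma markedProb_strictMonoOn {c : ℝ} (hc0 : 0 < c) (hc1 : c < 1) :
    StrictMonoOn (markedProb c) (Iic 1) := by
  have hm : 0 < 4*c*(1-c) := by nlinarith
  intro s _ t ht hst
  rcases (mem_Iic.mp ht).lt_or_eq with ht1 | rfl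
  · have hx : 1/(1-s) - 2*c < 1/(1-t) - 2*c := by gcongr
    rw [markedProb_eq_of_lt_one c (hst.trans ht1), markedProb_eq_of_lt_one c ht1]
    have := strictMono_div_sqrt_sq_add hm hx
    linarith
  · rw [markedProb_one]
    exact markedProb_lt_one hc0 hc1 hst

theorem stmt_8 (N : ℝ) (hN : N ≥ 2) :
    (fun s : ℝ => (1/2) * (1 + (1 - 2*((N-1)/N)*(1-s)) / Real.sqrt (1 - 4*((N-1)/N)*s*(1-s)))) 0
      = 1/N ∧
    (fun s : ℝ => (1/2) * (1 + (1 - 2*((N-1)/N)*(1-s)) / Real.sqrt (1 - 4*((N-1)/N)*s*(1-s)))) 1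
      = 1 ∧
    StrictMonoOn
      (fun s : ℝ => (1/2) * (1 + (1 - 2*((N-1)/N)*(1-s)) / Real.sqrt (1 - 4*((N-1)/N)*s*(1-s))))
      (Set.Icc 0 1) ∧
    ∀ s ∈ Set.Icc (0:ℝ) 1,
      (1/2) * (1 + (1 - 2*((N-1)/N)*(1-s)) / Real.sqrt (1 - 4*((N-1)/N)*s*(1-s)))
        ∈ Set.Icc (1/N) 1 := by
  change markedProb ((N-1)/N) 0 = 1/N ∧ markedProb ((N-1)/N) 1 = 1 ∧
    StrictMonoOn (markedProb ((N-1)/N)) (Icc 0 1) ∧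
    ∀ s ∈ Icc (0:ℝ) 1, markedProb ((N-1)/N) s ∈ Icc (1/N) 1
  have hN0 : 0 < N := by linarith
  have hc0 : 0 < (N-1)/N := div_pos (by linarith) hN0
  have hc1 : (N-1)/N < 1 := (div_lt_one hN0).mpr (by linarith)
  have h0 : markedProb ((N-1)/N) 0 = 1/N := by
    rw [markedProb_zero]; field_simp; ring
  have hmono := (markedProb_strictMonoOn hc0 hc1).mono (Icc_subset_Iic_self (a := 0))
  refine ⟨h0, markedProb_one _, hmono, fun s hs => ⟨?_, ?_⟩⟩
  · rw [← h0]
    exact hmono.monotoneOn (left_mem_Icc.mpr zero_le_one) hs hs.1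
  · calc markedProb ((N-1)/N) s ≤ markedProb ((N-1)/N) 1 :=
          hmono.monotoneOn hs (right_mem_Icc.mpr zero_le_one) hs.2
      _ = 1 := markedProb_one _
end

section
/- For N ≥ 2 and τ ∈ [0,1], substituting the proposed schedule s(τ) = (1/2)[1 + (2τ-1)/sqrt(1 + 4(N-1)τ(1-τ))] into q(s) = (1/2)[1 + (1 - 2((N-1)/N)(1-s))/sqrt(1 - 4((N-1)/N)s(1-s))] yields q = (1/(2N))[1 + 2(N-1)τ + sqrt(1 + 4(N-1)τ(1-τ))]. -/
theorem stmt_9 (N : ℝ) (hN : N ≥ 2) (τ : ℝ) (hτ : τ ∈ Set.Icc (0:ℝ) 1) :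
    (fun s : ℝ => (1/2) * (1 + (1 - 2*((N-1)/N)*(1-s)) / Real.sqrt (1 - 4*((N-1)/N)*s*(1-s))))
      ((1/2) * (1 + (2*τ-1) / Real.sqrt (1 + 4*(N-1)*τ*(1-τ))))
    = (1/(2*N)) * (1 + 2*(N-1)*τ + Real.sqrt (1 + 4*(N-1)*τ*(1-τ))) := by
  obtain ⟨h0, h1⟩ := hτ
  have hN0 : (0:ℝ) < N := by linarith
  have htt : (0:ℝ) ≤ τ*(1-τ) := mul_nonneg h0 (by linarith)
  have hE1 : (1:ℝ) ≤ 1 + 4*(N-1)*τ*(1-τ) := by nlinarith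
  set E := 1 + 4*(N-1)*τ*(1-τ) with hEdef
  have hEpos : (0:ℝ) < E := by linarith
  set D := Real.sqrt E with hDdef
  have hDpos : (0:ℝ) < D := Real.sqrt_pos.mpr hEpos
  have hD2 : D^2 = E := Real.sq_sqrt hEpos.le
  simp only
  set s := (1/2) * (1 + (2*τ-1) / D) with hs
  have hinner : 1 - 4*((N-1)/N)*s*(1-s) = 1/E := by
    rw [hs]
    field_simp
    nlinarith [hD2]
  rw [hinner]
  have hsq : Real.sqrt (1/E) = 1/D := by
    rw [one_div, Real.sqrt_inv, ← hDdef, one_div]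
  rw [hsq, hs]
  field_simp
  nlinarith [hD2]
end

section
/- For N ≥ 2 and τ ∈ [0,1], substituting the original schedule s(τ) = (1/2)[1 + tan((2τ-1)·arctan(sqrt(N-1)))/sqrt(N-1)] into q(s) = (1/2)[1 + (1 - 2((N-1)/N)(1-s))/sqrt(1 - 4((N-1)/N)s(1-s))] gives q = cos²((1-τ)·arccos(1/sqrt(N))). -/
/-!
Write `a = arctan √(N-1)` and `θ = (2τ-1) a`, so that `s = (1 + tan θ / √(N-1)) / 2`.
Then `1 - 4 ((N-1)/N) s (1-s) = 1 / (N cos² θ)` and `1 - 2 ((N-1)/N) (1-s) = (1 + √(N-1) tan θ) / N`;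
since `|θ| ≤ a < π/2` we have `cos θ > 0`, and `q` collapses to
`(1 + (cos θ + √(N-1) sin θ) / √N) / 2 = (1 + cos (a - θ)) / 2 = cos² ((1-τ) a)`,
using `cos a = 1/√N`, `sin a = √(N-1)/√N`, i.e. `a = arccos (1/√N)`.
-/

open Real

noncomputable def idealMarkedProb (N s : ℝ) : ℝ :=
  (1/2) * (1 + (1 - 2*((N-1)/N)*(1-s)) / √(1 - 4*((N-1)/N)*s*(1-s)))

lemma cos_mul_arctan_pos {c : ℝ} (hc : |c| ≤ 1) (x : ℝ) : 0 < cos (c * arctan x) := by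
  obtain ⟨hlo, hhi⟩ := arctan_mem_Ioo x
  have hbound : |c * arctan x| < π / 2 :=
    calc |c * arctan x| = |c| * |arctan x| := abs_mul _ _
      _ ≤ 1 * |arctan x| := by gcongr
      _ < π / 2 := by rw [one_mul]; exact abs_lt.2 ⟨hlo, hhi⟩
  exact cos_pos_of_mem_Ioo (abs_lt.1 hbound)

lemma arccos_one_div_sqrt {N : ℝ} (hN : 1 ≤ N) : arccos (1 / √N) = arctan √(N - 1) := by
  rw [arctan_eq_arccos (sqrt_nonneg _), sq_sqrt (by linarith), add_sub_cancel, one_div]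

lemma cos_arctan_sub (x θ : ℝ) :
    cos (arctan x - θ) = (cos θ + x * sin θ) / √(1 + x ^ 2) := by
  rw [cos_sub, cos_arctan, sin_arctan]
  ring

section TanSchedule

variable {N θ : ℝ}

lemma one_sub_four_mul_tan_schedule (hN : 1 < N) (hθ : cos θ ≠ 0) :
    1 - 4*((N-1)/N)*((1/2) * (1 + tan θ / √(N-1)))*(1 - (1/2) * (1 + tan θ / √(N-1)))
      = 1 / (N * cos θ ^ 2) := by
  have hx : √(N-1) ≠ 0 := (sqrt_pos.2 (by linarith)).ne'
  have hN0 : N ≠ 0 := by positivity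
  rw [tan_eq_sin_div_cos]
  field_simp
  linear_combination (4 * √(N-1) ^ 2) * sin_sq_add_cos_sq θ
    - (4 * sin θ ^ 2) * sq_sqrt (show (0:ℝ) ≤ N - 1 by linarith)

lemma idealMarkedProb_tan_schedule (hN : 1 < N) (hθ : 0 < cos θ) :
    idealMarkedProb N ((1/2) * (1 + tan θ / √(N-1))) = (1 + cos (arctan √(N-1) - θ)) / 2 := by
  have hN0 : 0 < N := by linarith
  have hx : 0 < √(N-1) := sqrt_pos.2 (by linarith)
  have hsqrt : √(1 - 4*((N-1)/N)*((1/2) * (1 + tan θ / √(N-1)))*(1 - (1/2) * (1 + tan θ / √(N-1))))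
      = 1 / (√N * cos θ) := by
    rw [one_sub_four_mul_tan_schedule hN hθ.ne', one_div, sqrt_inv, sqrt_mul hN0.le,
      sqrt_sq hθ.le, one_div]
  have h1x : 1 + √(N-1) ^ 2 = N := by rw [sq_sqrt (by linarith)]; ring
  rw [idealMarkedProb, hsqrt, cos_arctan_sub, h1x, tan_eq_sin_div_cos]
  have hsN : 0 < √N := sqrt_pos.2 hN0
  field_simp
  linear_combination (cos θ * √(N-1) + (N-1) * sin θ) * sq_sqrt hN0.le
    - (N * sin θ) * sq_sqrt (show (0:ℝ) ≤ N - 1 by linarith)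

end TanSchedule

theorem stmt_12 (N : ℝ) (hN : N ≥ 2) (τ : ℝ) (hτ : τ ∈ Set.Icc (0:ℝ) 1) :
    (fun s : ℝ => (1/2) * (1 + (1 - 2*((N-1)/N)*(1-s)) / Real.sqrt (1 - 4*((N-1)/N)*s*(1-s))))
      ((1/2) * (1 + Real.tan ((2*τ-1) * Real.arctan (Real.sqrt (N-1))) / Real.sqrt (N-1)))
    = Real.cos ((1-τ) * Real.arccos (1 / Real.sqrt N)) ^ 2 := by
  obtain ⟨hτ0, hτ1⟩ := hτ
  have hcos : 0 < cos ((2*τ-1) * arctan √(N-1)) :=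
    cos_mul_arctan_pos (abs_le.2 ⟨by linarith, by linarith⟩) _
  change idealMarkedProb N _ = _
  rw [idealMarkedProb_tan_schedule (by linarith) hcos, arccos_one_div_sqrt (by linarith), cos_sq,
    show arctan √(N-1) - (2*τ-1) * arctan √(N-1) = 2 * ((1-τ) * arctan √(N-1)) by ring]
  ring
end

section
/- Let p, q ∈ [0,1] and ε ∈ [0,1] with p ≤ q and q > ε². If pq + (1-p)(1-q) + 2·sqrt(pq(1-p)(1-q)) ≥ 1 - ε², then p ≥ q + ε²(1-2q) - 2·sqrt(ε²(1-ε²)q(1-q)). -/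
theorem stmt_15 (p q ε : ℝ) (hp : p ∈ Set.Icc (0:ℝ) 1) (hq : q ∈ Set.Icc (0:ℝ) 1)
    (hε : ε ∈ Set.Icc (0:ℝ) 1) (hpq : p ≤ q) (hqε : q > ε^2)
    (h : p*q + (1-p)*(1-q) + 2 * Real.sqrt (p*q*(1-p)*(1-q)) ≥ 1 - ε^2) :
    p ≥ q + ε^2*(1-2*q) - 2 * Real.sqrt (ε^2*(1-ε^2)*q*(1-q)) := by
  obtain ⟨hp0, hp1⟩ := hp
  obtain ⟨hq0, hq1⟩ := hq
  obtain ⟨hε0, hε1⟩ := hε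
  have hε2 : (0:ℝ) ≤ 1 - ε^2 := by
    have : ε^2 ≤ 1 := pow_le_one₀ hε0 hε1
    linarith only [this]
  set x := Real.sqrt p with hxdef
  set y := Real.sqrt (1-p) with hydef
  set a := Real.sqrt q with hadef
  set b := Real.sqrt (1-q) with hbdef
  set c := Real.sqrt (1-ε^2) with hcdef
  have hx : x^2 = p := Real.sq_sqrt hp0
  have hy : y^2 = 1-p := Real.sq_sqrt (by linarith only [hp1])
  have ha : a^2 = q := Real.sq_sqrt hq0
  have hb : b^2 = 1-q := Real.sq_sqrt (by linarith only [hq1])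
  have hc : c^2 = 1-ε^2 := Real.sq_sqrt hε2
  have hxn : 0 ≤ x := Real.sqrt_nonneg _
  have hyn : 0 ≤ y := Real.sqrt_nonneg _
  have han : 0 ≤ a := Real.sqrt_nonneg _
  have hbn : 0 ≤ b := Real.sqrt_nonneg _
  have hcn : 0 ≤ c := Real.sqrt_nonneg _
  have h1 : Real.sqrt (p*q*(1-p)*(1-q)) = x*a*(y*b) := by
    rw [show p*q*(1-p)*(1-q) = (p*q)*((1-p)*(1-q)) by ring,
      Real.sqrt_mul (by positivity), Real.sqrt_mul hp0,
      Real.sqrt_mul (by linarith only [hp1])]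
  have h2 : Real.sqrt (ε^2*(1-ε^2)*q*(1-q)) = ε*(c*(a*b)) := by
    rw [show ε^2*(1-ε^2)*q*(1-q) = ε^2*((1-ε^2)*(q*(1-q))) by ring,
      Real.sqrt_mul (sq_nonneg ε), Real.sqrt_sq hε0, Real.sqrt_mul hε2,
      Real.sqrt_mul hq0]
  rw [h1] at h
  have hxa2 : x^2*a^2 = p*q := by rw [hx, ha]
  have hyb2 : y^2*b^2 = (1-p)*(1-q) := by rw [hy, hb]
  have hca2 : c^2*a^2 = (1-ε^2)*q := by rw [hc, ha]
  have hεb2 : ε^2*b^2 = ε^2*(1-q) := by rw [hb]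
  have hs2 : 1 - ε^2 ≤ (x*a + y*b)^2 := by
    have hexp : (x*a + y*b)^2 = x^2*a^2 + y^2*b^2 + 2*(x*a*(y*b)) := by ring
    linarith only [h, hexp, hxa2, hyb2]
  have hF : c ≤ x*a + y*b := by
    have h3 := Real.sqrt_le_sqrt hs2
    rwa [Real.sqrt_sq (add_nonneg (mul_nonneg hxn han) (mul_nonneg hyn hbn))] at h3
  -- sine bound
  have hid : (y*a - x*b)^2 + (x*a + y*b)^2 = 1 := by
    have hrw : (y*a - x*b)^2 + (x*a + y*b)^2 = (x^2+y^2)*(a^2+b^2) := by ring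
    rw [hrw, hx, hy, ha, hb]; ring
  have hsin : (y*a - x*b)^2 ≤ ε^2 := by linarith only [hid, hs2]
  have hsin2 : y*a - x*b ≤ ε := by
    have h4 := Real.sqrt_le_sqrt hsin
    rw [Real.sqrt_sq_eq_abs, Real.sqrt_sq hε0] at h4
    exact (le_abs_self _).trans h4
  -- x ≥ c*a - ε*b
  have hab1 : a^2 + b^2 = 1 := by rw [ha, hb]; ring
  have hkey : c*a - ε*b ≤ x := by
    have m1 : a*(c - y*b) ≤ a*(x*a) :=
      mul_le_mul_of_nonneg_left (by linarith only [hF]) han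
    have m2 : b*(y*a - x*b) ≤ b*ε := mul_le_mul_of_nonneg_left hsin2 hbn
    have hxid : x*a^2 + x*b^2 = x := by linear_combination x*hab1
    have e1 : a*(c - y*b) = a*c - a*(y*b) := by ring
    have e2 : a*(x*a) = x*a^2 := by ring
    have e3 : b*(y*a - x*b) = a*(y*b) - x*b^2 := by ring
    rw [e1, e2] at m1
    rw [e3] at m2
    linarith only [m1, m2, hxid]
  have hpos : 0 ≤ c*a - ε*b := by
    have hsq : (ε*b)^2 ≤ (c*a)^2 := by
      have e1 : (ε*b)^2 = ε^2*b^2 := by ring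
      have e2 : (c*a)^2 = c^2*a^2 := by ring
      rw [e1, e2, hεb2, hca2]
      have hq2 : ε^2*q ≤ 1*q := mul_le_mul_of_nonneg_right (by linarith only [hε2]) hq0
      linarith only [hqε, hq2]
    have h5 := Real.sqrt_le_sqrt hsq
    rw [Real.sqrt_sq (mul_nonneg hε0 hbn), Real.sqrt_sq (mul_nonneg hcn han)] at h5
    linarith only [h5]
  have hfin : (c*a - ε*b)^2 ≤ x^2 := pow_le_pow_left₀ hpos hkey 2
  rw [h2]
  have hexp2 : (c*a - ε*b)^2 = c^2*a^2 + ε^2*b^2 - 2*(ε*(c*(a*b))) := by ring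
  linarith only [hfin, hexp2, hca2, hεb2, hx]
end

section
/- Let p, q ∈ [0,1] and ε ∈ [0,1] with p ≤ q and p < 1 - ε². If pq + (1-p)(1-q) + 2·sqrt(pq(1-p)(1-q)) ≥ 1 - ε², then q ≤ p + ε²(1-2p) + 2·sqrt(ε²(1-ε²)p(1-p)). -/
private lemma le_of_sq_le_sq' {x y : ℝ} (hx : 0 ≤ x) (hy : 0 ≤ y)
    (h : x^2 ≤ y^2) : x ≤ y := by
  nlinarith

theorem stmt_16 (p q ε : ℝ) (hp : p ∈ Set.Icc (0:ℝ) 1) (hq : q ∈ Set.Icc (0:ℝ) 1)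
    (hε : ε ∈ Set.Icc (0:ℝ) 1) (hpq : p ≤ q) (hpε : p < 1 - ε^2)
    (h : p*q + (1-p)*(1-q) + 2 * Real.sqrt (p*q*(1-p)*(1-q)) ≥ 1 - ε^2) :
    q ≤ p + ε^2*(1-2*p) + 2 * Real.sqrt (ε^2*(1-ε^2)*p*(1-p)) := by
  obtain ⟨hp0, hp1⟩ := hp
  obtain ⟨hq0, hq1⟩ := hq
  obtain ⟨he0, he1⟩ := hε
  have hp1' : (0:ℝ) ≤ 1 - p := by linarith
  have hq1' : (0:ℝ) ≤ 1 - q := by linarith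
  have he2 : ε^2 ≤ 1 := by nlinarith
  have he2' : (0:ℝ) ≤ 1 - ε^2 := by linarith
  -- rewrite the sqrt in h
  have hs1 : Real.sqrt (p*q*(1-p)*(1-q))
      = Real.sqrt p * Real.sqrt q * Real.sqrt (1-p) * Real.sqrt (1-q) := by
    rw [Real.sqrt_mul (by positivity : (0:ℝ) ≤ p*q*(1-p)),
      Real.sqrt_mul (by positivity : (0:ℝ) ≤ p*q), Real.sqrt_mul hp0]
  rw [hs1] at h
  -- rewrite the sqrt in goal
  have hs2 : Real.sqrt (ε^2*(1-ε^2)*p*(1-p))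
      = ε * Real.sqrt (1-ε^2) * Real.sqrt p * Real.sqrt (1-p) := by
    rw [Real.sqrt_mul (by positivity : (0:ℝ) ≤ ε^2*(1-ε^2)*p),
      Real.sqrt_mul (by positivity : (0:ℝ) ≤ ε^2*(1-ε^2)),
      Real.sqrt_mul (by positivity : (0:ℝ) ≤ ε^2), Real.sqrt_sq he0]
  rw [hs2]
  set a := Real.sqrt p with ha
  set b := Real.sqrt (1-p) with hb
  set c := Real.sqrt q with hc
  set d := Real.sqrt (1-q) with hd
  set f := Real.sqrt (1-ε^2) with hf
  have ha0 : 0 ≤ a := Real.sqrt_nonneg _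
  have hb0 : 0 ≤ b := Real.sqrt_nonneg _
  have hc0 : 0 ≤ c := Real.sqrt_nonneg _
  have hd0 : 0 ≤ d := Real.sqrt_nonneg _
  have hf0 : 0 ≤ f := Real.sqrt_nonneg _
  have ha2 : a^2 = p := Real.sq_sqrt hp0
  have hb2 : b^2 = 1-p := Real.sq_sqrt hp1'
  have hc2 : c^2 = q := Real.sq_sqrt hq0
  have hd2 : d^2 = 1-q := Real.sq_sqrt hq1'
  have hf2 : f^2 = 1-ε^2 := Real.sq_sqrt he2'
  clear_value a b c d f
  clear ha hb hc hd hf hs1 hs2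
  -- squared identities
  have iad : (a*d)^2 = p*(1-q) := by linear_combination d^2*ha2 + p*hd2
  have icb : (c*b)^2 = q*(1-p) := by linear_combination b^2*hc2 + q*hb2
  have ifb : (f*b)^2 = (1-ε^2)*(1-p) := by
    linear_combination b^2*hf2 + (1-ε^2)*hb2
  have iea : (ε*a)^2 = ε^2*p := by linear_combination ε^2*ha2
  have isum : (c*a + d*b)^2 + (c*b - a*d)^2 = 1 := by
    linear_combination (c^2+d^2)*ha2 + (c^2+d^2)*hb2 + hc2 + hd2
  have idiff : (c*b - a*d)^2 = q*(1-p) + p*(1-q) - 2*(a*c*b*d) := by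
    linear_combination q*hb2 + b^2*hc2 + d^2*ha2 + p*hd2
  -- c*b ≥ a*d
  have hord : a*d ≤ c*b :=
    le_of_sq_le_sq' (mul_nonneg ha0 hd0) (mul_nonneg hc0 hb0)
      (by rw [iad, icb]; linarith)
  -- (c*b - a*d)^2 ≤ ε^2
  have hsq : (c*b - a*d)^2 ≤ ε^2 := by rw [idiff]; linarith
  have h1 : c*b - a*d ≤ ε := le_of_sq_le_sq' (by linarith) he0 hsq
  have h2 : f ≤ c*a + d*b :=
    le_of_sq_le_sq' hf0 (by positivity) (by linarith [isum, hsq, hf2])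
  have e1 : (c*a + d*b)*b - (c*b - a*d)*a = d := by
    linear_combination d * ha2 + d * hb2
  have h3 : f*b - ε*a ≤ d := by
    have t1 : f*b ≤ (c*a + d*b)*b := mul_le_mul_of_nonneg_right h2 hb0
    have t2 : (c*b - a*d)*a ≤ ε*a := mul_le_mul_of_nonneg_right h1 ha0
    linarith
  have h4 : 0 ≤ f*b - ε*a := by
    have t : ε*a ≤ f*b :=
      le_of_sq_le_sq' (mul_nonneg he0 ha0) (mul_nonneg hf0 hb0)
        (by rw [iea, ifb]; linarith)
    linarith
  have h5 : (f*b - ε*a)^2 ≤ d^2 := by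
    have := mul_self_le_mul_self h4 h3
    linarith [this]
  linarith [h5, ifb, iea, hd2]
end

section
/- For ε ∈ [0,1] and q ∈ [0,1], the quantity q + ε²q(1-2q) - 2εq·sqrt((1-ε²q)(1-q)) is at least (1-ε)²q. -/
theorem stmt_18 (ε q : ℝ) (hε : ε ∈ Set.Icc (0:ℝ) 1) (hq : q ∈ Set.Icc (0:ℝ) 1) :
    (1-ε)^2 * q ≤ q + ε^2*q*(1-2*q) - 2*ε*q * Real.sqrt ((1-ε^2*q)*(1-q)) := by
  obtain ⟨hε0, hε1⟩ := hε
  obtain ⟨hq0, hq1⟩ := hq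
  have hεq : ε * q ≤ 1 := by nlinarith
  have hsqrt : Real.sqrt ((1-ε^2*q)*(1-q)) ≤ 1 - ε*q := by
    rw [show (1:ℝ) - ε*q = Real.sqrt ((1-ε*q)^2) from (Real.sqrt_sq (by linarith)).symm]
    apply Real.sqrt_le_sqrt
    nlinarith [mul_nonneg hq0 (sq_nonneg (1-ε))]
  nlinarith [mul_nonneg (mul_nonneg hε0 hq0) (sub_nonneg.2 hsqrt)]
end

section
/- For N ≥ 2 and ε with 0 < ε < 1: the inequality q ≤ ε², where q(τ) = (1/(2N))[1 + 2(N-1)τ + sqrt(1 + 4(N-1)τ(1-τ))] and τ ∈ [0,1], has a solution τ if and only if N ≥ 1/ε², and in that case the solution set is exactly 0 ≤ τ ≤ ε² - sqrt(ε²(1-ε²)/(N-1)). -/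
lemma stmt_19_aux_fwd (N ε τ s : ℝ) (hN : 2 ≤ N) (hu0 : 0 < ε^2) (hu1 : ε^2 < 1)
    (hN1 : 1 ≤ N*ε^2) (hτ1 : τ ≤ 1) (hs0 : 0 ≤ s)
    (hs2' : s^2 * (N-1) = ε^2*(1-ε^2))
    (hc0 : 0 ≤ 2*N*ε^2 - 1 - 2*(N-1)*τ) (hge2 : s^2 ≤ (τ - ε^2)^2) :
    τ ≤ ε^2 - s := by
  have ha0 : (0:ℝ) < N - 1 := by linarith
  by_contra hcon
  push_neg at hcon
  have hst : s ≤ τ - ε^2 := by nlinarith [hge2, hs0, hcon, sq_nonneg (τ - ε^2 + s)]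
  have h1 : s ≤ 1 - ε^2 := by linarith
  have h1' : s^2 ≤ (1-ε^2)^2 := by nlinarith [hs0]
  have h2 : ε^2 ≤ (N-1)*(1-ε^2) := by
    have hm := mul_le_mul_of_nonneg_right h1' (le_of_lt ha0)
    nlinarith [hm, hs2', sub_pos.mpr hu1]
  have hside : 2*(N-1)*(τ-ε^2) ≤ 2*ε^2 - 1 := by nlinarith [hc0]
  have h4 : 2*(N-1)*s ≤ 2*ε^2 - 1 := by
    nlinarith [mul_le_mul_of_nonneg_left hst (show (0:ℝ) ≤ 2*(N-1) by linarith), hside]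
  have h4n : (0:ℝ) ≤ 2*(N-1)*s := by positivity
  have h5' : (2*(N-1)*s)^2 = 4*(N-1)*(ε^2*(1-ε^2)) := by
    linear_combination (4*(N-1)) * hs2'
  have h5 : 4*(N-1)*(ε^2*(1-ε^2)) ≤ (2*ε^2-1)^2 := by
    rw [← h5']
    exact pow_le_pow_left₀ h4n h4 2
  have e1 : 4*(1-ε^2) ≤ 4*(N*(ε^2*(1-ε^2))) := by
    nlinarith [mul_nonneg (sub_nonneg.mpr hN1) (le_of_lt (sub_pos.mpr hu1))]
  have hN1' : 1 ≤ N*(1-ε^2) := by nlinarith [h2]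
  have e2 : 4*ε^2 ≤ 4*(N*(ε^2*(1-ε^2))) := by
    nlinarith [mul_nonneg (sub_nonneg.mpr hN1') (le_of_lt hu0)]
  nlinarith [h5, e1, e2]

lemma stmt_19_aux_bwd (N ε τ s : ℝ) (hN : 2 ≤ N) (hu0 : 0 < ε^2) (hu1 : ε^2 < 1)
    (hN1 : 1 ≤ N*ε^2) (hτ : τ ≤ ε^2 - s) (hs0 : 0 ≤ s)
    (hs2' : s^2 * (N-1) = ε^2*(1-ε^2)) :
    0 ≤ 2*N*ε^2 - 1 - 2*(N-1)*τ := by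
  have ha0 : (0:ℝ) < N - 1 := by linarith
  have hm := mul_le_mul_of_nonneg_left hτ (show (0:ℝ) ≤ 2*(N-1) by linarith)
  rcases le_or_gt (1/2 : ℝ) (ε^2) with hhalf | hhalf
  · nlinarith [hm, mul_nonneg (show (0:ℝ) ≤ 2*(N-1) by linarith) hs0]
  · have hX : 1 ≤ 4*(N*(ε^2*(1-ε^2))) := by
      nlinarith [mul_nonneg (sub_nonneg.mpr hN1) (by linarith : (0:ℝ) ≤ 1-ε^2)]
    have h5' : (2*(N-1)*s)^2 = 4*(N-1)*(ε^2*(1-ε^2)) := by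
      linear_combination (4*(N-1)) * hs2'
    have hcmp : (1-2*ε^2)^2 ≤ (2*(N-1)*s)^2 := by
      rw [h5']; nlinarith [hX]
    have h2as : 1 - 2*ε^2 ≤ 2*(N-1)*s := by
      nlinarith [hcmp, mul_nonneg (show (0:ℝ) ≤ 2*(N-1) by linarith) hs0,
        (by linarith : (0:ℝ) ≤ 1-2*ε^2)]
    nlinarith [hm, h2as]

theorem stmt_19 (N : ℝ) (hN : N ≥ 2) (ε : ℝ) (hε : 0 < ε) (hε1 : ε < 1) :
    ((∃ τ ∈ Set.Icc (0:ℝ) 1,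
        (1/(2*N)) * (1 + 2*(N-1)*τ + Real.sqrt (1 + 4*(N-1)*τ*(1-τ))) ≤ ε^2)
      ↔ N ≥ 1/ε^2) ∧
    (N ≥ 1/ε^2 → ∀ τ ∈ Set.Icc (0:ℝ) 1,
      ((1/(2*N)) * (1 + 2*(N-1)*τ + Real.sqrt (1 + 4*(N-1)*τ*(1-τ))) ≤ ε^2 ↔
        τ ≤ ε^2 - Real.sqrt (ε^2*(1-ε^2)/(N-1)))) := by
  have hu0 : 0 < ε^2 := by positivity
  have hu1 : ε^2 < 1 := by nlinarith
  have hN0 : (0:ℝ) < N := by linarith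
  have ha0 : (0:ℝ) < N - 1 := by linarith
  have h2N : (0:ℝ) < 2*N := by linarith
  have hNe : N ≥ 1/ε^2 ↔ 1 ≤ N * ε^2 := by
    rw [ge_iff_le, div_le_iff₀ hu0]
  have key : ∀ X : ℝ, ((1/(2*N)) * X ≤ ε^2 ↔ X ≤ 2*N*ε^2) := by
    intro X
    constructor
    · intro h
      have e : 2*N*((1/(2*N))*X) = X := by field_simp
      nlinarith [mul_le_mul_of_nonneg_left h (le_of_lt h2N)]
    · intro h
      have e : 2*N*((1/(2*N))*X) = X := by field_simp
      nlinarith [mul_le_mul_of_nonneg_left h (le_of_lt (show (0:ℝ) < 1/(2*N) by positivity))]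
  constructor
  · constructor
    · rintro ⟨τ, ⟨hτ0, hτ1⟩, hq⟩
      have harg : (1:ℝ) ≤ 1 + 4*(N-1)*τ*(1-τ) := by
        nlinarith [mul_nonneg (mul_nonneg (by linarith : (0:ℝ) ≤ 4*(N-1)) hτ0)
          (by linarith : (0:ℝ) ≤ 1-τ)]
      have ht1 : (1:ℝ) ≤ Real.sqrt (1 + 4*(N-1)*τ*(1-τ)) := by
        rw [show (1:ℝ) = Real.sqrt 1 from (Real.sqrt_one).symm]
        exact Real.sqrt_le_sqrt (by rw [Real.sqrt_one]; linarith)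
      rw [hNe]
      have hX := (key _).mp hq
      nlinarith [mul_nonneg (le_of_lt ha0) hτ0]
    · intro hge
      have hN1 : 1 ≤ N * ε^2 := hNe.mp hge
      refine ⟨0, ⟨le_refl 0, by norm_num⟩, ?_⟩
      rw [show (1 + 4*(N-1)*0*(1-(0:ℝ))) = 1 by ring, Real.sqrt_one]
      rw [key]
      nlinarith
  · intro hge τ ⟨hτ0, hτ1⟩
    have hN1 : 1 ≤ N * ε^2 := hNe.mp hge
    set s := Real.sqrt (ε^2*(1-ε^2)/(N-1)) with hs_def
    have hs0 : 0 ≤ s := Real.sqrt_nonneg _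
    have hs2 : s^2 = ε^2*(1-ε^2)/(N-1) :=
      Real.sq_sqrt (div_nonneg (by nlinarith) (by linarith))
    have hs2' : s^2 * (N-1) = ε^2*(1-ε^2) := by
      rw [hs2]; field_simp
    set t := Real.sqrt (1 + 4*(N-1)*τ*(1-τ)) with ht_def
    have harg : (1:ℝ) ≤ 1 + 4*(N-1)*τ*(1-τ) := by
      nlinarith [mul_nonneg (mul_nonneg (by linarith : (0:ℝ) ≤ 4*(N-1)) hτ0)
        (by linarith : (0:ℝ) ≤ 1-τ)]
    have ht0 : 0 ≤ t := Real.sqrt_nonneg _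
    have ht2 : t^2 = 1 + 4*(N-1)*τ*(1-τ) := Real.sq_sqrt (by linarith)
    have hpos : (0:ℝ) < 4*(N-1)*N := by positivity
    have iden : (2*N*ε^2 - 1 - 2*(N-1)*τ)^2 - (1 + 4*(N-1)*τ*(1-τ))
        = 4*(N-1)*N*((τ-ε^2)^2 - s^2) := by
      linear_combination (4*N) * hs2'
    rw [key]
    constructor
    · intro hq
      have htc : t ≤ 2*N*ε^2 - 1 - 2*(N-1)*τ := by linarith
      have hc0 : 0 ≤ 2*N*ε^2 - 1 - 2*(N-1)*τ := le_trans ht0 htc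
      have hsq : 1 + 4*(N-1)*τ*(1-τ) ≤ (2*N*ε^2 - 1 - 2*(N-1)*τ)^2 := by
        have hp := pow_le_pow_left₀ ht0 htc 2
        rw [ht2] at hp
        exact hp
      have h9 : 0 ≤ 4*(N-1)*N*((τ-ε^2)^2 - s^2) := by linarith [iden]
      have hge2 : s^2 ≤ (τ - ε^2)^2 := by
        have h10 : 0 ≤ (τ-ε^2)^2 - s^2 := (mul_nonneg_iff_of_pos_left hpos).mp h9
        linarith
      exact stmt_19_aux_fwd N ε τ s hN hu0 hu1 hN1 hτ1 hs0 hs2' hc0 hge2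
    · intro hτ
      have hst : s ≤ ε^2 - τ := by linarith
      have hge2 : s^2 ≤ (τ - ε^2)^2 := by nlinarith [hs0]
      have hc0 : 0 ≤ 2*N*ε^2 - 1 - 2*(N-1)*τ :=
        stmt_19_aux_bwd N ε τ s hN hu0 hu1 hN1 hτ hs0 hs2'
      have h9 : 0 ≤ 4*(N-1)*N*((τ-ε^2)^2 - s^2) := by
        nlinarith [mul_le_mul_of_nonneg_left hge2 (le_of_lt hpos)]
      have hsq : 1 + 4*(N-1)*τ*(1-τ) ≤ (2*N*ε^2 - 1 - 2*(N-1)*τ)^2 := by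
        linarith [iden, h9]
      have htc : t ≤ 2*N*ε^2 - 1 - 2*(N-1)*τ := by
        rw [ht_def, show 2*N*ε^2 - 1 - 2*(N-1)*τ
          = Real.sqrt ((2*N*ε^2 - 1 - 2*(N-1)*τ)^2) from (Real.sqrt_sq hc0).symm]
        exact Real.sqrt_le_sqrt hsq
      linarith
end
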